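/- arXiv:2511.13454 — 2 statements merged into one kernel-verified Lean document; each statement's English description precedes it below -/
import Mathlib

section
/- Let p, q, K, λ₁, λ₂, a₁, a₂ be real numbers with 1 ≤ p ≤ q, K ≥ 1, λ₁ > 0, λ₂ > 0, a₁ ≥ 0, a₂ ≥ 0, and suppose λ₁^p + a₁·λ₁^q = λ₂^p + a₂·λ₂^q. If either a₁·λ₁^q ≤ K·λ₁^p or a₁ ≤ 2·a₂, then λ₂ ≤ (2·(1+K))^(1/p)·λ₁. -/
/-!
Write `H_a(λ) = λ^p + a·λ^q`. In the p-phase case `λ₂^p ≤ H_{a₂}(λ₂) = H_{a₁}(λ₁) ≤ (1+K)·λ₁^p`.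
Otherwise `H_{a₂}(λ₂) = H_{a₁}(λ₁) ≤ 2·H_{a₂}(λ₁)`, and since `q ≥ p` stretching the argument
by `s ≥ 1` multiplies `H_{a₂}` by at least `s^p`, so `(λ₂/λ₁)^p ≤ 2`. Taking `p`-th roots
gives the claim.
-/

open Real

noncomputable def doublePhase (p q a t : ℝ) : ℝ := t ^ p + a * t ^ q

lemma doublePhase_pos {p q a t : ℝ} (ha : 0 ≤ a) (ht : 0 < t) : 0 < doublePhase p q a t := by
  unfold doublePhase
  positivity

lemma rpow_mul_doublePhase_le {p q a s t : ℝ} (hpq : p ≤ q) (ha : 0 ≤ a)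
    (hs : 1 ≤ s) (ht : 0 ≤ t) :
    s ^ p * doublePhase p q a t ≤ doublePhase p q a (s * t) := by
  have hs₀ : 0 ≤ s := zero_le_one.trans hs
  have hsq : s ^ p ≤ s ^ q := rpow_le_rpow_of_exponent_le hs hpq
  unfold doublePhase
  rw [mul_rpow hs₀ ht, mul_rpow hs₀ ht, mul_add, mul_left_comm]
  gcongr

lemma rpow_le_mul_rpow_of_doublePhase_le {p q a C lam μ : ℝ} (hp : 0 ≤ p) (hpq : p ≤ q)
    (ha : 0 ≤ a) (hC : 1 ≤ C) (hlam : 0 < lam) (hμ : 0 ≤ μ)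
    (h : doublePhase p q a μ ≤ C * doublePhase p q a lam) :
    μ ^ p ≤ C * lam ^ p := by
  rcases le_or_gt μ lam with hle | hlt
  · calc μ ^ p ≤ lam ^ p := rpow_le_rpow hμ hle hp
      _ ≤ C * lam ^ p := le_mul_of_one_le_left (rpow_nonneg hlam.le p) hC
  · set s := μ / lam
    have hμs : μ = s * lam := (div_mul_cancel₀ μ hlam.ne').symm
    have hs : 1 ≤ s := (one_le_div hlam).mpr hlt.le
    have hsp : s ^ p ≤ C := by
      refine le_of_mul_le_mul_right ?_ (doublePhase_pos (p := p) (q := q) ha hlam)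
      calc s ^ p * doublePhase p q a lam ≤ doublePhase p q a μ :=
            hμs ▸ rpow_mul_doublePhase_le hpq ha hs hlam.le
        _ ≤ C * doublePhase p q a lam := h
    rw [hμs, mul_rpow (zero_le_one.trans hs) hlam.le]
    exact mul_le_mul_of_nonneg_right hsp (rpow_nonneg hlam.le p)

lemma le_rpow_inv_mul_of_rpow_le_mul {p C x y : ℝ} (hp : 0 < p) (hC : 0 ≤ C) (hx : 0 ≤ x)
    (hy : 0 ≤ y) (h : x ^ p ≤ C * y ^ p) : x ≤ C ^ p⁻¹ * y := by
  have hroot : x ≤ (C * y ^ p) ^ p⁻¹ :=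
    (le_rpow_inv_iff_of_pos hx (by positivity) hp).mpr h
  rwa [mul_rpow hC (rpow_nonneg hy p), rpow_rpow_inv hy hp.ne'] at hroot

theorem stmt_13_general (p q K lam₁ lam₂ a₁ a₂ : ℝ)
    (hp : 1 ≤ p) (hpq : p ≤ q) (hK : 1 ≤ K)
    (hl₁ : 0 < lam₁) (hl₂ : 0 < lam₂) (ha₂ : 0 ≤ a₂)
    (hΛ : lam₁ ^ p + a₁ * lam₁ ^ q = lam₂ ^ p + a₂ * lam₂ ^ q)
    (hcase : a₁ * lam₁ ^ q ≤ K * lam₁ ^ p ∨ a₁ ≤ 2 * a₂) :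
    lam₂ ≤ (2 * (1 + K)) ^ (1 / p) * lam₁ := by
  have hp₀ : 0 < p := zero_lt_one.trans_le hp
  have hpow : lam₂ ^ p ≤ 2 * (1 + K) * lam₁ ^ p := by
    have h₁ := rpow_pos_of_pos hl₁ p
    have h₂ := rpow_nonneg hl₂.le q
    rcases hcase with hphase | hcoef
    · nlinarith [mul_nonneg ha₂ h₂]
    · have hH : doublePhase p q a₂ lam₂ ≤ 2 * doublePhase p q a₂ lam₁ := by
        unfold doublePhase
        nlinarith [rpow_nonneg hl₁.le q]
      have h₂p := rpow_le_mul_rpow_of_doublePhase_le hp₀.le hpq ha₂ one_le_two hl₁ hl₂.le hH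
      nlinarith
  rw [one_div]
  exact le_rpow_inv_mul_of_rpow_le_mul hp₀ (by positivity) hl₂.le hl₁.le hpow

/-- Comparison (eq : lambda_z_2 less than lambda_z_1) in Subsection 6.1:
if `λ₁^p + a₁·λ₁^q = λ₂^p + a₂·λ₂^q` and either the p-phase condition
`a₁·λ₁^q ≤ K·λ₁^p` or the comparability `a₁ ≤ 2·a₂` holds, then
`λ₂ ≤ (2(1+K))^(1/p)·λ₁`. -/
theorem stmt_13 (p q K lam₁ lam₂ a₁ a₂ : ℝ)
    (hp : 1 ≤ p) (hpq : p ≤ q) (hK : 1 ≤ K)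
    (hl₁ : 0 < lam₁) (hl₂ : 0 < lam₂) (ha₁ : 0 ≤ a₁) (ha₂ : 0 ≤ a₂)
    (hΛ : lam₁ ^ p + a₁ * lam₁ ^ q = lam₂ ^ p + a₂ * lam₂ ^ q)
    (hcase : a₁ * lam₁ ^ q ≤ K * lam₁ ^ p ∨ a₁ ≤ 2 * a₂) :
    lam₂ ≤ (2 * (1 + K)) ^ (1 / p) * lam₁ :=
  stmt_13_general p q K lam₁ lam₂ a₁ a₂ hp hpq hK hl₁ hl₂ ha₂ hΛ hcase
end

section
/- Let p, q, K, λ₁, λ₂, a₁, a₂, ℓ₁, ℓ₂ be real numbers with 2 ≤ p ≤ q, K ≥ 1, λ₁ > 0, λ₂ > 0, a₁ ≥ 0, a₂ ≥ 0, ℓ₁ > 0, ℓ₂ > 0, ℓ₁ ≤ 2·ℓ₂, and set Λ := λ₁^p + a₁·λ₁^q and κ := 10·K. Assume Λ = λ₂^p + a₂·λ₂^q, a₁·λ₁^q ≤ K·λ₁^p and λ₁^p ≤ 4·K·λ₂^p. Then 2·λ₁^(2−p)·ℓ₁² + (λ₂²/Λ)·ℓ₂² ≤ (λ₂²/Λ)·(κ·ℓ₂)².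 -/
/-- Time-interval inclusion computation in case (iii) of Subsection 6.1:
with `Λ = λ₁^p + a₁·λ₁^q = λ₂^p + a₂·λ₂^q`, `κ = 10K`, the p-phase condition
`a₁·λ₁^q ≤ K·λ₁^p` and the comparison `λ₁^p ≤ 4K·λ₂^p`, one has
`2·λ₁^(2−p)·ℓ₁² + (λ₂²/Λ)·ℓ₂² ≤ (λ₂²/Λ)·(κ·ℓ₂)²`. -/
theorem stmt_16 (p q K lam₁ lam₂ a₁ a₂ l₁ l₂ : ℝ)
    (hp : 2 ≤ p) (hpq : p ≤ q) (hK : 1 ≤ K)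
    (hl₁pos : 0 < lam₁) (hl₂pos : 0 < lam₂) (ha₁ : 0 ≤ a₁) (ha₂ : 0 ≤ a₂)
    (hl1 : 0 < l₁) (hl2 : 0 < l₂) (hll : l₁ ≤ 2 * l₂)
    (hΛ : lam₁ ^ p + a₁ * lam₁ ^ q = lam₂ ^ p + a₂ * lam₂ ^ q)
    (hphase : a₁ * lam₁ ^ q ≤ K * lam₁ ^ p)
    (hcomp : lam₁ ^ p ≤ 4 * K * lam₂ ^ p) :
    2 * lam₁ ^ (2 - p) * l₁ ^ 2 +
        (lam₂ ^ 2 / (lam₁ ^ p + a₁ * lam₁ ^ q)) * l₂ ^ 2 ≤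
      (lam₂ ^ 2 / (lam₁ ^ p + a₁ * lam₁ ^ q)) * (10 * K * l₂) ^ 2 := by
  have hppos : 0 < p := by linarith
  have hX : 0 < lam₁ ^ p := Real.rpow_pos_of_pos hl₁pos p
  have hY : 0 < lam₂ ^ p := Real.rpow_pos_of_pos hl₂pos p
  have ha : 0 ≤ a₁ * lam₁ ^ q := mul_nonneg ha₁ (Real.rpow_pos_of_pos hl₁pos q).le
  have hΛpos : 0 < lam₁ ^ p + a₁ * lam₁ ^ q := by linarith
  have h2mp : lam₁ ^ (2 - p) = lam₁ ^ 2 / lam₁ ^ p := by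
    rw [Real.rpow_sub hl₁pos, Real.rpow_two]
  have hsq : lam₁ ^ 2 ≤ 4 * K * lam₂ ^ 2 := by
    have h1 : (lam₁ ^ p) ^ (2 / p) ≤ (4 * K * lam₂ ^ p) ^ (2 / p) :=
      Real.rpow_le_rpow hX.le hcomp (by positivity)
    have h2 : (lam₁ ^ p) ^ (2 / p) = lam₁ ^ (2 : ℕ) := by
      rw [← Real.rpow_natCast lam₁ 2, ← Real.rpow_mul hl₁pos.le]
      congr 1
      field_simp
      norm_num
    have h3 : (4 * K * lam₂ ^ p) ^ (2 / p) = (4 * K) ^ (2 / p) * lam₂ ^ (2 : ℕ) := by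
      rw [Real.mul_rpow (by positivity) hY.le, ← Real.rpow_mul hl₂pos.le,
        ← Real.rpow_natCast lam₂ 2]
      congr 1
      · field_simp
        norm_num
    have h4 : (4 * K) ^ (2 / p) ≤ 4 * K := by
      calc (4 * K) ^ (2 / p) ≤ (4 * K) ^ (1 : ℝ) :=
            Real.rpow_le_rpow_of_exponent_le (by linarith)
              (by rw [div_le_one hppos]; linarith)
        _ = 4 * K := Real.rpow_one _
    calc lam₁ ^ 2 = (lam₁ ^ p) ^ (2 / p) := h2.symm
      _ ≤ (4 * K * lam₂ ^ p) ^ (2 / p) := h1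
      _ = (4 * K) ^ (2 / p) * lam₂ ^ 2 := h3
      _ ≤ 4 * K * lam₂ ^ 2 := by nlinarith [sq_nonneg lam₂]
  rw [h2mp, ← sub_nonneg]
  have key : 0 ≤ (lam₂ ^ 2 * (10 * K * l₂) ^ 2 * lam₁ ^ p - lam₂ ^ 2 * l₂ ^ 2 * lam₁ ^ p
      - 2 * lam₁ ^ 2 * l₁ ^ 2 * (lam₁ ^ p + a₁ * lam₁ ^ q)) := by
    have hl1sq : l₁ ^ 2 ≤ 4 * l₂ ^ 2 := by nlinarith
    have h5 : lam₁ ^ 2 * l₁ ^ 2 ≤ (4 * K * lam₂ ^ 2) * (4 * l₂ ^ 2) :=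
      mul_le_mul hsq hl1sq (sq_nonneg _) (by positivity)
    have h6 : lam₁ ^ p + a₁ * lam₁ ^ q ≤ 2 * K * lam₁ ^ p := by nlinarith
    have hprod : (lam₁ ^ 2 * l₁ ^ 2) * (lam₁ ^ p + a₁ * lam₁ ^ q) ≤
        ((4 * K * lam₂ ^ 2) * (4 * l₂ ^ 2)) * (2 * K * lam₁ ^ p) :=
      mul_le_mul h5 h6 hΛpos.le (by positivity)
    have hrest : 0 ≤ (36 * K ^ 2 - 1) * (lam₂ ^ 2 * l₂ ^ 2 * lam₁ ^ p) := by
      have : (0:ℝ) ≤ 36 * K ^ 2 - 1 := by nlinarith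
      positivity
    nlinarith [hprod, hrest]
  have expand : (lam₂ ^ 2 / (lam₁ ^ p + a₁ * lam₁ ^ q)) * (10 * K * l₂) ^ 2 -
      (2 * (lam₁ ^ 2 / lam₁ ^ p) * l₁ ^ 2 +
        (lam₂ ^ 2 / (lam₁ ^ p + a₁ * lam₁ ^ q)) * l₂ ^ 2) =
      (lam₂ ^ 2 * (10 * K * l₂) ^ 2 * lam₁ ^ p - lam₂ ^ 2 * l₂ ^ 2 * lam₁ ^ p
      - 2 * lam₁ ^ 2 * l₁ ^ 2 * (lam₁ ^ p + a₁ * lam₁ ^ q)) /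
        (lam₁ ^ p * (lam₁ ^ p + a₁ * lam₁ ^ q)) := by
    field_simp
    ring
  rw [expand]
  positivity
end
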